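/- arXiv:1407.3164 — 2 statements merged into one kernel-verified Lean document; each statement's English description precedes it below -/
import Mathlib

section
/- Let G = □_{i∈I} G_i be a connected simple Cartesian product graph. Then R is a finest RSP-relation on E(G) if and only if R = □_{i∈I} R_i is the product of relations R_i, where each R_i is a finest RSP-relation on E(G_i). -/
open SimpleGraph

variable {V : Type*}

/-- An equivalence relation on a set `E` of edges: reflexive on `E`, symmetric, transitive,
and only relating elements of `E`. -/
structure IsEquivOn (R : Sym2 V → Sym2 V → Prop) (E : Set (Sym2 V)) : Prop where
  refl : ∀ e ∈ E, R e e
  symm : ∀ {e f}, R e f → R f e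
  trans : ∀ {e f g}, R e f → R f g → R e g
  mem_left : ∀ {e f}, R e f → e ∈ E
  mem_right : ∀ {e f}, R e f → f ∈ E

/-- `R` is an RSP-relation on `G`: an equivalence relation on `E(G)` such that any two adjacent
edges in distinct classes span a square (4-cycle) with opposite edges in the same class. -/
def IsRSP (G : SimpleGraph V) (R : Sym2 V → Sym2 V → Prop) : Prop :=
  IsEquivOn R G.edgeSet ∧
  ∀ x y z : V, G.Adj x y → G.Adj x z → y ≠ z → ¬ R s(x, y) s(x, z) →
    ∃ w : V, w ≠ x ∧ w ≠ y ∧ w ≠ z ∧ G.Adj y w ∧ G.Adj z w ∧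
      R s(x, y) s(z, w) ∧ R s(x, z) s(y, w)

/-- A finest RSP-relation: an RSP-relation such that every finer RSP-relation coincides
with it. -/
def IsFinestRSP (G : SimpleGraph V) (R : Sym2 V → Sym2 V → Prop) : Prop :=
  IsRSP G R ∧ ∀ S : Sym2 V → Sym2 V → Prop, IsRSP G S →
    (∀ e f, S e f → R e f) → (∀ e f, R e f → S e f)

/-- The Cartesian product of an indexed family of simple graphs. -/
def cartProd {I : Type*} {W : I → Type*} (G : ∀ i, SimpleGraph (W i)) :
    SimpleGraph (∀ i, W i) where
  Adj x y := ∃ j, (G j).Adj (x j) (y j) ∧ ∀ i, i ≠ j → x i = y i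
  symm := ⟨by
    rintro x y ⟨j, h1, h2⟩
    exact ⟨j, h1.symm, fun i hi => (h2 i hi).symm⟩⟩
  loopless := ⟨by
    rintro x ⟨j, h1, -⟩
    exact (G j).loopless.irrefl _ h1⟩

/-- The product relation `□ᵢ Rᵢ` on the edge set of a Cartesian product: two edges are
related iff they belong to the same factor direction `j` and their `j`-projections are
related by `Rⱼ`. -/
def prodRel {I : Type*} {W : I → Type*} (G : ∀ i, SimpleGraph (W i))
    (Rel : ∀ i, Sym2 (W i) → Sym2 (W i) → Prop)
    (e f : Sym2 (∀ i, W i)) : Prop :=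
  ∃ j, ∃ x y u v : ∀ i, W i, e = s(x, y) ∧ f = s(u, v) ∧
    (G j).Adj (x j) (y j) ∧ (∀ i, i ≠ j → x i = y i) ∧
    (G j).Adj (u j) (v j) ∧ (∀ i, i ≠ j → u i = v i) ∧
    Rel j s(x j, y j) s(u j, v j)

/-!
Two adjacent edges of `□ᵢ Gᵢ` pointing in different factor directions lie on a unique
square, and the RSP property at its corners forces every RSP-relation to relate opposite
edges of that square. Along a path in the connected product, every edge is therefore related
to all its translates, so an RSP-relation is recovered from its restrictions to the layers
through a fixed vertex, as long as it only relates edges of the same direction. A finest one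
does: intersecting an RSP-relation with "same direction" keeps the RSP property. Restriction
to layers and the product construction both preserve RSP-relations and inclusions, which
transfers finestness in both directions.
-/

open Function

variable {I : Type*} {W : I → Type*} {G : ∀ i, SimpleGraph (W i)}

variable (G) in
def DirAdj (j : I) (x y : ∀ i, W i) : Prop :=
  (G j).Adj (x j) (y j) ∧ ∀ i, i ≠ j → x i = y i

namespace DirAdj

variable {j k : I} {x y z : ∀ i, W i}

theorem symm (h : DirAdj G j x y) : DirAdj G j y x :=
  ⟨h.1.symm, fun i hi => (h.2 i hi).symm⟩

theorem ne (h : DirAdj G j x y) : x ≠ y :=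
  fun hxy => h.1.ne (congrFun hxy j)

theorem adj (h : DirAdj G j x y) : (cartProd G).Adj x y :=
  ⟨j, h⟩

theorem unique (hj : DirAdj G j x y) (hk : DirAdj G k x y) : j = k := by
  by_contra hjk
  exact hk.1.ne (hj.2 k (Ne.symm hjk))

theorem apply_ne_apply (hxy : DirAdj G j x y) (hxz : DirAdj G j x z) (hyz : y ≠ z) :
    y j ≠ z j := by
  intro h
  apply hyz
  funext i
  by_cases hij : i = j
  · subst hij
    exact h
  · exact (hxy.2 i hij).symm.trans (hxz.2 i hij)

end DirAdj

section Update

variable [DecidableEq I] {j k : I} {x y u v : ∀ i, W i}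

theorem dirAdj_update_iff {a b : W j} :
    DirAdj G k (update x j a) (update x j b) ↔ k = j ∧ (G j).Adj a b := by
  constructor
  · intro h
    obtain rfl : k = j := by
      by_contra hkj
      exact h.1.ne (by rw [update_of_ne hkj, update_of_ne hkj])
    simpa using h.1
  · rintro ⟨rfl, hab⟩
    exact ⟨by simpa using hab, fun i hi => by rw [update_of_ne hi, update_of_ne hi]⟩

theorem DirAdj.dirAdj_update (hxy : DirAdj G j x y) {d : W j} (hd : (G j).Adj (y j) d) :
    DirAdj G j y (update x j d) :=
  ⟨by rwa [update_self], fun i hi => by rw [update_of_ne hi, hxy.2 i hi]⟩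

theorem DirAdj.update_of_ne (h : DirAdj G k u v) (hkj : k ≠ j) (a : W j) :
    DirAdj G k (update u j a) (update v j a) := by
  refine ⟨by rw [Function.update_of_ne hkj, Function.update_of_ne hkj]; exact h.1, fun i hi => ?_⟩
  by_cases hij : i = j
  · subst hij
    rw [update_self, update_self]
  · rw [Function.update_of_ne hij, Function.update_of_ne hij, h.2 i hi]

theorem DirAdj.update_apply_eq (h : DirAdj G j x y) : update x j (y j) = y :=
  update_eq_iff.2 ⟨rfl, h.2⟩

theorem DirAdj.update_eq_update (h : DirAdj G j u v) (a : W j) : update u j a = update v j a := by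
  rw [← h.update_apply_eq, update_idem]

end Update

section Squares

variable {j k a : I} {x y z w w' : ∀ i, W i}

theorem ne_of_dirAdj_of_dirAdj (hjk : j ≠ k) (hxy : DirAdj G j x y) (hyz : DirAdj G k y z) :
    x ≠ z :=
  fun h => hxy.1.ne ((hyz.2 j hjk).trans (congrFun h j).symm).symm

theorem dir_eq_of_common_neighbor_same (hoff : ∀ i, i ≠ j → y i = z i) (hj : y j ≠ z j)
    (hyw : DirAdj G a y w) (hzw : (cartProd G).Adj z w) : a = j := by
  by_contra haj
  obtain ⟨b, -, hzb⟩ := hzw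
  have hba : b = a := by
    by_contra hba
    exact hyw.1.ne ((hoff a haj).trans (hzb a (Ne.symm hba)))
  exact hj ((hyw.2 j (Ne.symm haj)).trans (hzb j (hba ▸ Ne.symm haj)).symm)

theorem dirAdj_of_common_neighbor_same (hxy : DirAdj G j x y) (hxz : DirAdj G j x z)
    (hyz : y ≠ z) (hyw : (cartProd G).Adj y w) (hzw : (cartProd G).Adj z w) :
    DirAdj G j y w ∧ DirAdj G j z w := by
  have hoff : ∀ i, i ≠ j → y i = z i := fun i hi => (hxy.2 i hi).symm.trans (hxz.2 i hi)
  have hj := hxy.apply_ne_apply hxz hyz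
  obtain ⟨a, hya⟩ := hyw
  obtain ⟨b, hzb⟩ := hzw
  obtain rfl := dir_eq_of_common_neighbor_same hoff hj hya ⟨b, hzb⟩
  obtain rfl := dir_eq_of_common_neighbor_same (fun i hi => (hoff i hi).symm)
    (Ne.symm hj) hzb ⟨a, hya⟩
  exact ⟨hya, hzb⟩

theorem dir_eq_of_common_neighbor_mixed (hjk : j ≠ k) (hxy : DirAdj G j x y)
    (hxz : DirAdj G k x z) (hwx : w ≠ x) (hyw : DirAdj G a y w) (hzw : (cartProd G).Adj z w) :
    a = k := by
  by_contra hak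
  obtain ⟨b, -, hzb⟩ := hzw
  have hwk : w k = x k := (hyw.2 k (Ne.symm hak)).symm.trans (hxy.2 k (Ne.symm hjk)).symm
  obtain rfl : b = k := by
    by_contra hbk
    exact hxz.1.ne ((hzb k (Ne.symm hbk)).trans hwk).symm
  apply hwx
  funext i
  by_cases hib : i = b
  · subst hib
    exact hwk
  · exact (hzb i hib).symm.trans (hxz.2 i hib).symm

theorem dirAdj_of_common_neighbor_mixed (hjk : j ≠ k) (hxy : DirAdj G j x y)
    (hxz : DirAdj G k x z) (hwx : w ≠ x) (hyw : (cartProd G).Adj y w)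
    (hzw : (cartProd G).Adj z w) : DirAdj G k y w ∧ DirAdj G j z w := by
  obtain ⟨a, hya⟩ := hyw
  obtain ⟨b, hzb⟩ := hzw
  obtain rfl := dir_eq_of_common_neighbor_mixed hjk hxy hxz hwx hya ⟨b, hzb⟩
  obtain rfl := dir_eq_of_common_neighbor_mixed (Ne.symm hjk) hxz hxy hwx hzb ⟨a, hya⟩
  exact ⟨hya, hzb⟩

theorem exists_square (hjk : j ≠ k) (hxy : DirAdj G j x y) (hxz : DirAdj G k x z) :
    ∃ w, DirAdj G k y w ∧ DirAdj G j z w := by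
  classical
  refine ⟨update y k (z k), ⟨?_, fun i hi => (update_of_ne hi _ _).symm⟩, ?_, fun i hi => ?_⟩
  · rw [update_self, ← hxy.2 k (Ne.symm hjk)]
    exact hxz.1
  · rw [update_of_ne hjk, ← hxz.2 j hjk]
    exact hxy.1
  · by_cases hik : i = k
    · subst hik
      rw [update_self]
    · rw [update_of_ne hik, ← hxz.2 i hik, hxy.2 i hi]

theorem eq_of_square (hjk : j ≠ k) (hyw : DirAdj G k y w) (hzw : DirAdj G j z w)
    (hyw' : DirAdj G k y w') (hzw' : DirAdj G j z w') : w = w' := by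
  funext i
  by_cases hik : i = k
  · subst hik
    exact (hzw.2 i (Ne.symm hjk)).symm.trans (hzw'.2 i (Ne.symm hjk))
  · exact (hyw.2 i hik).symm.trans (hyw'.2 i hik)

end Squares

section RSP

variable {R : Sym2 (∀ i, W i) → Sym2 (∀ i, W i) → Prop}

/-- If the edges at `x` are unrelated, the square that the RSP property produces at `x` is this
one; otherwise argue in the same way at `z`, or conclude by transitivity. -/
theorem IsRSP.rel_of_square (hR : IsRSP (cartProd G) R) {j k : I} {x y z w : ∀ i, W i}
    (hjk : j ≠ k) (hxy : DirAdj G j x y) (hxz : DirAdj G k x z) (hyw : DirAdj G k y w)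
    (hzw : DirAdj G j z w) : R s(x, y) s(z, w) := by
  by_cases hxyz : R s(x, y) s(x, z)
  · by_cases hzwx : R s(z, w) s(z, x)
    · exact hR.1.trans hxyz (hR.1.symm (by rwa [Sym2.eq_swap (a := x)]))
    · obtain ⟨v, hvz, -, -, hwv, hxv, hzv, -⟩ := hR.2 z w x hzw.adj hxz.symm.adj
        (ne_of_dirAdj_of_dirAdj (Ne.symm hjk) hyw.symm hxy.symm) hzwx
      obtain ⟨hwv', hxv'⟩ := dirAdj_of_common_neighbor_mixed hjk hzw hxz.symm hvz hwv hxv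
      obtain rfl := eq_of_square hjk hyw.symm hxy hwv' hxv'
      exact hR.1.symm hzv
  · obtain ⟨v, hvx, -, -, hyv, hzv, hxv, -⟩ := hR.2 x y z hxy.adj hxz.adj
      (ne_of_dirAdj_of_dirAdj hjk hxy.symm hxz) hxyz
    obtain ⟨hyv', hzv'⟩ := dirAdj_of_common_neighbor_mixed hjk hxy hxz hvx hyv hzv
    rwa [eq_of_square hjk hyw hzw hyv' hzv']

theorem isRSP_cartProd_of_squares (hR : IsEquivOn R (cartProd G).edgeSet)
    (hsquare : ∀ {j k x y z w}, j ≠ k → DirAdj G j x y → DirAdj G k x z → DirAdj G k y w →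
      DirAdj G j z w → R s(x, y) s(z, w))
    (hlayer : ∀ {j x y z}, DirAdj G j x y → DirAdj G j x z → y ≠ z → ¬ R s(x, y) s(x, z) →
      ∃ w, w ≠ x ∧ w ≠ y ∧ w ≠ z ∧ DirAdj G j y w ∧ DirAdj G j z w ∧
        R s(x, y) s(z, w) ∧ R s(x, z) s(y, w)) :
    IsRSP (cartProd G) R := by
  refine ⟨hR, fun x y z ⟨j, hxy⟩ ⟨k, hxz⟩ hyz hnR => ?_⟩
  obtain rfl | hjk := eq_or_ne j k
  · obtain ⟨w, hwx, hwy, hwz, hyw, hzw, h₁, h₂⟩ := hlayer hxy hxz hyz hnR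
    exact ⟨w, hwx, hwy, hwz, hyw.adj, hzw.adj, h₁, h₂⟩
  · obtain ⟨w, hyw, hzw⟩ := exists_square hjk hxy hxz
    exact ⟨w, (ne_of_dirAdj_of_dirAdj hjk hxy hyw).symm, hyw.ne.symm, hzw.ne.symm, hyw.adj,
      hzw.adj, hsquare hjk hxy hxz hyw hzw, hsquare (Ne.symm hjk) hxz hxy hzw hyw⟩

end RSP

variable (G) in
def dirEdgeSet (j : I) : Set (Sym2 (∀ i, W i)) :=
  Sym2.fromRel (r := DirAdj G j) ⟨fun _ _ => DirAdj.symm⟩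

variable (G) in
def SameDir (e f : Sym2 (∀ i, W i)) : Prop :=
  ∃ j, e ∈ dirEdgeSet G j ∧ f ∈ dirEdgeSet G j

section Edges

variable {j k : I} {e f : Sym2 (∀ i, W i)}

theorem dirEdgeSet_subset_edgeSet : dirEdgeSet G j ⊆ (cartProd G).edgeSet :=
  Sym2.ind fun _ _ h => DirAdj.adj h

theorem exists_mem_dirEdgeSet (he : e ∈ (cartProd G).edgeSet) : ∃ j, e ∈ dirEdgeSet G j := by
  induction e using Sym2.ind with
  | _ x y => exact he

theorem eq_of_mem_dirEdgeSet (hj : e ∈ dirEdgeSet G j) (hk : e ∈ dirEdgeSet G k) : j = k := by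
  induction e using Sym2.ind with
  | _ x y => exact DirAdj.unique hj hk

theorem map_apply_mem_edgeSet (he : e ∈ dirEdgeSet G j) : e.map (· j) ∈ (G j).edgeSet := by
  induction e using Sym2.ind with
  | _ x y => exact he.1

end Edges

section ProdRel

variable {Rel Rel' : ∀ i, Sym2 (W i) → Sym2 (W i) → Prop} {e f : Sym2 (∀ i, W i)}

theorem prodRel_iff :
    prodRel G Rel e f ↔
      ∃ j, e ∈ dirEdgeSet G j ∧ f ∈ dirEdgeSet G j ∧ Rel j (e.map (· j)) (f.map (· j)) := by
  constructor
  · rintro ⟨j, x, y, u, v, rfl, rfl, hxy, hxy', huv, huv', h⟩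
    exact ⟨j, ⟨hxy, hxy'⟩, ⟨huv, huv'⟩, h⟩
  · rintro ⟨j, he, hf, h⟩
    induction e using Sym2.ind with
    | _ x y =>
      induction f using Sym2.ind with
      | _ u v => exact ⟨j, x, y, u, v, rfl, rfl, he.1, he.2, hf.1, hf.2, h⟩

theorem prodRel_mono (hle : ∀ i e f, Rel i e f → Rel' i e f) (h : prodRel G Rel e f) :
    prodRel G Rel' e f :=
  let ⟨j, x, y, u, v, he, hf, hxy, hxy', huv, huv', hr⟩ := h
  ⟨j, x, y, u, v, he, hf, hxy, hxy', huv, huv', hle j _ _ hr⟩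

theorem isEquivOn_prodRel (hRel : ∀ i, IsEquivOn (Rel i) (G i).edgeSet) :
    IsEquivOn (prodRel G Rel) (cartProd G).edgeSet where
  refl e he :=
    let ⟨j, hj⟩ := exists_mem_dirEdgeSet he
    prodRel_iff.2 ⟨j, hj, hj, (hRel j).refl _ (map_apply_mem_edgeSet hj)⟩
  symm h :=
    let ⟨j, he, hf, h⟩ := prodRel_iff.1 h
    prodRel_iff.2 ⟨j, hf, he, (hRel j).symm h⟩
  trans h h' := by
    obtain ⟨j, he, hf, h⟩ := prodRel_iff.1 h
    obtain ⟨k, hf', hg, h'⟩ := prodRel_iff.1 h'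
    obtain rfl := eq_of_mem_dirEdgeSet hf hf'
    exact prodRel_iff.2 ⟨j, he, hg, (hRel j).trans h h'⟩
  mem_left h :=
    let ⟨_, he, _⟩ := prodRel_iff.1 h
    dirEdgeSet_subset_edgeSet he
  mem_right h :=
    let ⟨_, _, hf, _⟩ := prodRel_iff.1 h
    dirEdgeSet_subset_edgeSet hf

theorem isRSP_prodRel (hRel : ∀ i, IsRSP (G i) (Rel i)) : IsRSP (cartProd G) (prodRel G Rel) := by
  classical
  refine isRSP_cartProd_of_squares (isEquivOn_prodRel fun i => (hRel i).1) ?_ ?_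
  · intro j k x y z w hjk hxy hxz hyw hzw
    refine ⟨j, x, y, z, w, rfl, rfl, hxy.1, hxy.2, hzw.1, hzw.2, ?_⟩
    rw [← hxz.2 j hjk, ← hyw.2 j hjk]
    exact (hRel j).1.refl _ hxy.1
  · intro j x y z hxy hxz hyz hnR
    obtain ⟨d, hdx, hdy, hdz, hyd, hzd, h₁, h₂⟩ := (hRel j).2 (x j) (y j) (z j) hxy.1 hxz.1
      (hxy.apply_ne_apply hxz hyz)
      fun h => hnR ⟨j, x, y, x, z, rfl, rfl, hxy.1, hxy.2, hxz.1, hxz.2, h⟩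
    have hyw := hxy.dirAdj_update hyd
    have hzw := hxz.dirAdj_update hzd
    refine ⟨update x j d, fun h => hdx ?_, fun h => hdy ?_, fun h => hdz ?_, hyw, hzw,
      ⟨j, x, y, z, _, rfl, rfl, hxy.1, hxy.2, hzw.1, hzw.2, by rwa [update_self]⟩,
      ⟨j, x, z, y, _, rfl, rfl, hxz.1, hxz.2, hyw.1, hyw.2, by rwa [update_self]⟩⟩
    all_goals simpa using congrFun h j

end ProdRel

section SameDir

variable {R : Sym2 (∀ i, W i) → Sym2 (∀ i, W i) → Prop} {e f : Sym2 (∀ i, W i)}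

theorem IsEquivOn.and {V : Type*} {R S : Sym2 V → Sym2 V → Prop} {E : Set (Sym2 V)}
    (hR : IsEquivOn R E) (hS : IsEquivOn S E) : IsEquivOn (fun e f => R e f ∧ S e f) E where
  refl e he := ⟨hR.refl e he, hS.refl e he⟩
  symm h := ⟨hR.symm h.1, hS.symm h.2⟩
  trans h h' := ⟨hR.trans h.1 h'.1, hS.trans h.2 h'.2⟩
  mem_left h := hR.mem_left h.1
  mem_right h := hR.mem_right h.1

theorem isEquivOn_sameDir : IsEquivOn (SameDir G) (cartProd G).edgeSet where
  refl e he :=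
    let ⟨j, hj⟩ := exists_mem_dirEdgeSet he
    ⟨j, hj, hj⟩
  symm h :=
    let ⟨j, he, hf⟩ := h
    ⟨j, hf, he⟩
  trans h h' := by
    obtain ⟨j, he, hf⟩ := h
    obtain ⟨k, hf', hg⟩ := h'
    obtain rfl := eq_of_mem_dirEdgeSet hf hf'
    exact ⟨j, he, hg⟩
  mem_left h :=
    let ⟨_, he, _⟩ := h
    dirEdgeSet_subset_edgeSet he
  mem_right h :=
    let ⟨_, _, hf⟩ := h
    dirEdgeSet_subset_edgeSet hf

theorem IsRSP.and_sameDir (hR : IsRSP (cartProd G) R) :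
    IsRSP (cartProd G) (fun e f => R e f ∧ SameDir G e f) := by
  refine isRSP_cartProd_of_squares (hR.1.and isEquivOn_sameDir)
    (fun {j _ _ _ _ _} hjk hxy hxz hyw hzw =>
      ⟨hR.rel_of_square hjk hxy hxz hyw hzw, j, hxy, hzw⟩) ?_
  intro j x y z hxy hxz hyz hnR
  obtain ⟨w, hwx, hwy, hwz, hyw, hzw, h₁, h₂⟩ :=
    hR.2 x y z hxy.adj hxz.adj hyz fun h => hnR ⟨h, j, hxy, hxz⟩
  obtain ⟨hyw', hzw'⟩ := dirAdj_of_common_neighbor_same hxy hxz hyz hyw hzw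
  exact ⟨w, hwx, hwy, hwz, hyw', hzw', ⟨h₁, j, hxy, hzw'⟩, ⟨h₂, j, hxz, hyw'⟩⟩

theorem IsFinestRSP.sameDir (hR : IsFinestRSP (cartProd G) R) (h : R e f) : SameDir G e f :=
  (hR.2 _ hR.1.and_sameDir (fun _ _ h => h.1) e f h).2

end SameDir

/-- The restriction of `S` to the `G j`-layer through `x₀`. -/
def layerRel [DecidableEq I] (S : Sym2 (∀ i, W i) → Sym2 (∀ i, W i) → Prop) (x₀ : ∀ i, W i)
    (j : I) (e f : Sym2 (W j)) : Prop :=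
  S (e.map (update x₀ j)) (f.map (update x₀ j))

section Layers

variable [DecidableEq I] {S : Sym2 (∀ i, W i) → Sym2 (∀ i, W i) → Prop} {x₀ : ∀ i, W i}
  {j k : I} {e f : Sym2 (∀ i, W i)}

theorem map_update_mem_dirEdgeSet_iff {e : Sym2 (W j)} :
    e.map (update x₀ j) ∈ dirEdgeSet G k ↔ k = j ∧ e ∈ (G j).edgeSet := by
  induction e using Sym2.ind with
  | _ a b => exact dirAdj_update_iff

theorem map_update_mem_edgeSet_iff {e : Sym2 (W j)} :
    e.map (update x₀ j) ∈ (cartProd G).edgeSet ↔ e ∈ (G j).edgeSet := by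
  induction e using Sym2.ind with
  | _ a b =>
    exact ⟨fun ⟨_, h⟩ => (dirAdj_update_iff.1 h).2, fun h => ⟨j, dirAdj_update_iff.2 ⟨rfl, h⟩⟩⟩

theorem map_apply_map_update (e : Sym2 (W j)) : (e.map (update x₀ j)).map (· j) = e := by
  simp [Sym2.map_map]

theorem isRSP_layerRel (hS : IsRSP (cartProd G) S) (x₀ : ∀ i, W i) (j : I) :
    IsRSP (G j) (layerRel S x₀ j) := by
  refine ⟨⟨fun e he => hS.1.refl _ (map_update_mem_edgeSet_iff.2 he), hS.1.symm, hS.1.trans,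
    fun h => map_update_mem_edgeSet_iff.1 (hS.1.mem_left h),
    fun h => map_update_mem_edgeSet_iff.1 (hS.1.mem_right h)⟩, ?_⟩
  intro a b c hab hac hbc hnS
  have hxy : DirAdj G j (update x₀ j a) (update x₀ j b) := dirAdj_update_iff.2 ⟨rfl, hab⟩
  have hxz : DirAdj G j (update x₀ j a) (update x₀ j c) := dirAdj_update_iff.2 ⟨rfl, hac⟩
  have hyz := (update_injective x₀ j).ne hbc
  obtain ⟨w, hwx, hwy, hwz, hyw, hzw, h₁, h₂⟩ := hS.2 _ _ _ hxy.adj hxz.adj hyz hnS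
  obtain ⟨hyw', hzw'⟩ := dirAdj_of_common_neighbor_same hxy hxz hyz hyw hzw
  obtain ⟨d, rfl⟩ : ∃ d, w = update x₀ j d :=
    ⟨w j, hyw'.update_apply_eq.symm.trans (update_idem _ _ _)⟩
  simp only [ne_eq, (update_injective x₀ j).eq_iff] at hwx hwy hwz
  exact ⟨d, hwx, hwy, hwz, (dirAdj_update_iff.1 hyw').2, (dirAdj_update_iff.1 hzw').2, h₁, h₂⟩

theorem IsRSP.rel_update_update (hS : IsRSP (cartProd G) S) (hpre : (cartProd G).Preconnected)
    {a b : W j} (hab : (G j).Adj a b) (x x' : ∀ i, W i) :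
    S s(update x j a, update x j b) s(update x' j a, update x' j b) := by
  have hlift : ∀ x, DirAdj G j (update x j a) (update x j b) := fun _ =>
    dirAdj_update_iff.2 ⟨rfl, hab⟩
  obtain ⟨p⟩ := hpre x x'
  induction p with
  | nil => exact hS.1.refl _ (hlift _).adj
  | cons huv _ ih =>
    obtain ⟨k, huv⟩ : ∃ k, DirAdj G k _ _ := huv
    obtain rfl | hkj := eq_or_ne k j
    · rwa [huv.update_eq_update a, huv.update_eq_update b]
    · exact hS.1.trans (hS.rel_of_square (Ne.symm hkj) (hlift _) (huv.update_of_ne hkj a)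
        (huv.update_of_ne hkj b) (hlift _)) ih

theorem IsRSP.rel_map_update (hS : IsRSP (cartProd G) S) (hpre : (cartProd G).Preconnected)
    (he : e ∈ dirEdgeSet G j) (x₀ : ∀ i, W i) : S e ((e.map (· j)).map (update x₀ j)) := by
  induction e using Sym2.ind with
  | _ x y =>
    have := hS.rel_update_update hpre he.1 x x₀
    rwa [update_eq_self, DirAdj.update_apply_eq he] at this

theorem IsRSP.rel_of_prodRel_layerRel (hS : IsRSP (cartProd G) S)
    (hpre : (cartProd G).Preconnected) (h : prodRel G (layerRel S x₀) e f) : S e f := by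
  obtain ⟨j, he, hf, h⟩ := prodRel_iff.1 h
  exact hS.1.trans (hS.rel_map_update hpre he x₀)
    (hS.1.trans h (hS.1.symm (hS.rel_map_update hpre hf x₀)))

theorem IsRSP.prodRel_layerRel_of_rel (hS : IsRSP (cartProd G) S)
    (hpre : (cartProd G).Preconnected) (h : S e f) (hef : SameDir G e f) :
    prodRel G (layerRel S x₀) e f := by
  obtain ⟨j, he, hf⟩ := hef
  exact prodRel_iff.2 ⟨j, he, hf, hS.1.trans (hS.1.symm (hS.rel_map_update hpre he x₀))
    (hS.1.trans h (hS.rel_map_update hpre hf x₀))⟩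

theorem layerRel_prodRel_iff {Rel : ∀ i, Sym2 (W i) → Sym2 (W i) → Prop}
    (hRel : IsEquivOn (Rel j) (G j).edgeSet) {e f : Sym2 (W j)} :
    layerRel (prodRel G Rel) x₀ j e f ↔ Rel j e f := by
  constructor
  · intro h
    obtain ⟨k, he, -, h⟩ := prodRel_iff.1 h
    obtain ⟨rfl, -⟩ := map_update_mem_dirEdgeSet_iff.1 he
    rwa [map_apply_map_update, map_apply_map_update] at h
  · intro h
    refine prodRel_iff.2 ⟨j, map_update_mem_dirEdgeSet_iff.2 ⟨rfl, hRel.mem_left h⟩,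
      map_update_mem_dirEdgeSet_iff.2 ⟨rfl, hRel.mem_right h⟩, ?_⟩
    rwa [map_apply_map_update, map_apply_map_update]

end Layers

section Finest

variable [DecidableEq I] {R : Sym2 (∀ i, W i) → Sym2 (∀ i, W i) → Prop}
  {Rel : ∀ i, Sym2 (W i) → Sym2 (W i) → Prop}

theorem IsFinestRSP.eq_prodRel_layerRel (hR : IsFinestRSP (cartProd G) R)
    (hpre : (cartProd G).Preconnected) (x₀ : ∀ i, W i) : R = prodRel G (layerRel R x₀) :=
  funext₂ fun _ _ => propext
    ⟨fun h => hR.1.prodRel_layerRel_of_rel hpre h (hR.sameDir h),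
      hR.1.rel_of_prodRel_layerRel hpre⟩

theorem isFinestRSP_prodRel (hRel : ∀ i, IsFinestRSP (G i) (Rel i))
    (hpre : (cartProd G).Preconnected) (x₀ : ∀ i, W i) :
    IsFinestRSP (cartProd G) (prodRel G Rel) := by
  refine ⟨isRSP_prodRel fun i => (hRel i).1, fun S hS hSR e f h => ?_⟩
  have hRelS : ∀ j e f, Rel j e f → layerRel S x₀ j e f := fun j =>
    (hRel j).2 _ (isRSP_layerRel hS x₀ j) fun e f h =>
      (layerRel_prodRel_iff (hRel j).1.1).1 (hSR _ _ h)
  exact hS.rel_of_prodRel_layerRel hpre (prodRel_mono hRelS h)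

/-- Replacing `Rel j` by a finer RSP-relation `S` gives a finer RSP-relation on the product,
which by finestness is the same relation. -/
theorem IsFinestRSP.of_prodRel (hRel : ∀ i, IsRSP (G i) (Rel i))
    (h : IsFinestRSP (cartProd G) (prodRel G Rel)) (x₀ : ∀ i, W i) (j : I) :
    IsFinestRSP (G j) (Rel j) := by
  refine ⟨hRel j, fun S hS hSRel e f hef => ?_⟩
  have hRel' : ∀ i, IsRSP (G i) (update Rel j S i) := by
    intro i
    by_cases hij : i = j
    · subst hij
      simpa using hS
    · simpa [update_of_ne hij] using hRel i
  have hle : ∀ i e f, update Rel j S i e f → Rel i e f := by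
    intro i
    by_cases hij : i = j
    · subst hij
      simpa using hSRel
    · simp [update_of_ne hij]
  have := h.2 _ (isRSP_prodRel hRel') (fun _ _ => prodRel_mono hle) _ _
    ((layerRel_prodRel_iff (x₀ := x₀) (hRel j).1).2 hef)
  simpa using (layerRel_prodRel_iff (hRel' j).1).1 this

end Finest

theorem stmt6_general {I : Type} {W : I → Type}
    (G : ∀ i, SimpleGraph (W i)) (hconn : (cartProd G).Connected)
    (R : Sym2 (∀ i, W i) → Sym2 (∀ i, W i) → Prop) :
    IsFinestRSP (cartProd G) R ↔
      ∃ Rel : ∀ i, Sym2 (W i) → Sym2 (W i) → Prop,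
        (∀ i, IsFinestRSP (G i) (Rel i)) ∧ ∀ e f, R e f ↔ prodRel G Rel e f := by
  classical
  obtain ⟨x₀⟩ := hconn.nonempty
  constructor
  · intro hR
    have hlayer := isRSP_layerRel hR.1 x₀
    have hReq := hR.eq_prodRel_layerRel hconn.preconnected x₀
    refine ⟨layerRel R x₀, fun j => ?_, fun e f => by rw [← hReq]⟩
    rw [hReq] at hR
    exact hR.of_prodRel hlayer x₀ j
  · rintro ⟨Rel, hRel, hR⟩
    obtain rfl : R = prodRel G Rel := funext₂ fun e f => propext (hR e f)
    exact isFinestRSP_prodRel hRel hconn.preconnected x₀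

/-- `R` is a finest RSP-relation on a connected Cartesian product `□ᵢ Gᵢ` iff `R` is the
product of finest RSP-relations on the factors. -/
theorem stmt6 {I : Type} [Fintype I] {W : I → Type} [∀ i, Fintype (W i)]
    (G : ∀ i, SimpleGraph (W i)) (hconn : (cartProd G).Connected)
    (R : Sym2 (∀ i, W i) → Sym2 (∀ i, W i) → Prop) :
    IsFinestRSP (cartProd G) R ↔
      ∃ Rel : ∀ i, Sym2 (W i) → Sym2 (W i) → Prop,
        (∀ i, IsFinestRSP (G i) (Rel i)) ∧ ∀ e f, R e f ↔ prodRel G Rel e f :=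
  stmt6_general G hconn R
end

section
/- Let G be a graph with a well-behaved RSP-relation R, φ a class of R, and G_φ^x, G_φ^y two distinct adjacent φ-layers. Then the graph C_{G_φ^x, G_φ^y} (vertices: edges of G joining the two layers; adjacency: being opposite edges of a square with one side in each layer) is a covering graph of G_φ^x, via the map [a,b] ↦ a, which is locally bijective. -/
open SimpleGraph

variable {V : Type*}

/-- `R` is well-behaved on `G`: no `K_{2,3}`-subgraph of `G` (canonical bipartition
`{x,y}, {a,b,c}`) has a forbidden coloring, i.e., edges `[a,x], [x,c], [y,b]` in one class
and the remaining three edges outside that class. -/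
def WellBehaved (G : SimpleGraph V) (R : Sym2 V → Sym2 V → Prop) : Prop :=
  ¬ ∃ x y a b c : V, x ≠ y ∧ a ≠ b ∧ a ≠ c ∧ b ≠ c ∧
    G.Adj x a ∧ G.Adj x b ∧ G.Adj x c ∧ G.Adj y a ∧ G.Adj y b ∧ G.Adj y c ∧
    R s(a, x) s(x, c) ∧ R s(a, x) s(y, b) ∧
    ¬ R s(a, x) s(x, b) ∧ ¬ R s(a, x) s(a, y) ∧ ¬ R s(a, x) s(c, y)

/-- The graph `C_{G_φ^x, G_φ^y}`: vertices are the edges of `G` joining the `φ`-layer of `x`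
to the `φ`-layer of `y` (encoded as ordered pairs with first endpoint in the layer of `x`);
two such edges are adjacent iff they are opposite edges of a square whose other two opposite
edges lie in `φ`, one in each layer. -/
def coverGraph (G : SimpleGraph V) (φ : Set (Sym2 V)) (x y : V) :
    SimpleGraph {p : V × V //
      (G.deleteEdges φᶜ).Reachable x p.1 ∧ (G.deleteEdges φᶜ).Reachable y p.2 ∧
      G.Adj p.1 p.2} where
  Adj p q :=
    G.Adj p.1.1 q.1.1 ∧ s(p.1.1, q.1.1) ∈ φ ∧ G.Adj p.1.2 q.1.2 ∧ s(p.1.2, q.1.2) ∈ φ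
  symm := by
    constructor
    rintro p q ⟨h1, h2, h3, h4⟩
    exact ⟨h1.symm, by rwa [Sym2.eq_swap], h3.symm, by rwa [Sym2.eq_swap]⟩
  loopless := by
    constructor
    rintro p ⟨h1, -⟩
    exact G.loopless.irrefl _ h1

/-!
An edge `[a,b]` between the layers is lifted along a `φ`-edge `[a,c]` by the square that the
RSP-property spans on `[a,b]` and `[a,c]` (these lie in distinct classes, since `[a,b]` joins
two distinct `φ`-layers); its fourth vertex `w` gives the lift `[c,w]`. Two different lifts
`[c,d₁]`, `[c,d₂]` would form, together with `[a,b]`, a `K_{2,3}` on `{b,c}, {d₁,a,d₂}` whose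
coloring is forbidden.
-/

theorem IsEquivOn.rel_congr_left {R : Sym2 V → Sym2 V → Prop} {E : Set (Sym2 V)}
    (hE : IsEquivOn R E) {e f g : Sym2 V} (h : R e f) : R e g ↔ R f g :=
  ⟨hE.trans (hE.symm h), hE.trans h⟩

namespace SimpleGraph

variable {G : SimpleGraph V}

theorem deleteEdges_compl_adj {φ : Set (Sym2 V)} {u v : V} :
    (G.deleteEdges φᶜ).Adj u v ↔ G.Adj u v ∧ s(u, v) ∈ φ := by
  rw [deleteEdges_adj, Set.mem_compl_iff, not_not]

theorem mk_notMem_of_not_reachable {φ : Set (Sym2 V)} (hφ : φ ⊆ G.edgeSet) {x y u v : V}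
    (hxy : ¬ (G.deleteEdges φᶜ).Reachable x y) (hu : (G.deleteEdges φᶜ).Reachable x u)
    (hv : (G.deleteEdges φᶜ).Reachable y v) : s(u, v) ∉ φ := fun huv =>
  hxy (hu.trans ((deleteEdges_compl_adj.2 ⟨hφ huv, huv⟩).reachable.trans hv.symm))

end SimpleGraph

variable {G : SimpleGraph V} {R : Sym2 V → Sym2 V → Prop} {e₀ : Sym2 V}

theorem IsRSP.exists_square_of_not_rel_of_rel (hR : IsRSP G R) {a b c : V}
    (hab : G.Adj a b) (hac : G.Adj a c) (habφ : ¬ R e₀ s(a, b)) (hacφ : R e₀ s(a, c)) :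
    ∃ w, G.Adj c w ∧ G.Adj b w ∧ R e₀ s(b, w) := by
  obtain ⟨hE, hsq⟩ := hR
  have hbc : b ≠ c := by
    rintro rfl
    exact habφ hacφ
  have hnR : ¬ R s(a, b) s(a, c) := fun h => habφ (hE.trans hacφ (hE.symm h))
  obtain ⟨w, -, -, -, hbw, hcw, -, hbwR⟩ := hsq a b c hab hac hbc hnR
  exact ⟨w, hcw, hbw, hE.trans hacφ hbwR⟩

theorem WellBehaved.eq_of_squares (hwb : WellBehaved G R) (hE : IsEquivOn R G.edgeSet)
    {a b c d₁ d₂ : V} (hab : G.Adj a b) (hac : G.Adj a c) (hbd₁ : G.Adj b d₁)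
    (hbd₂ : G.Adj b d₂) (hcd₁ : G.Adj c d₁) (hcd₂ : G.Adj c d₂)
    (habφ : ¬ R e₀ s(a, b)) (hacφ : R e₀ s(a, c)) (hbd₁φ : R e₀ s(b, d₁))
    (hbd₂φ : R e₀ s(b, d₂)) (hcd₁φ : ¬ R e₀ s(c, d₁)) (hcd₂φ : ¬ R e₀ s(c, d₂)) :
    d₁ = d₂ := by
  have hbc : b ≠ c := by
    rintro rfl
    exact habφ hacφ
  have had₁ : a ≠ d₁ := by
    rintro rfl
    rw [Sym2.eq_swap] at hbd₁φ
    exact habφ hbd₁φ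
  have had₂ : a ≠ d₂ := by
    rintro rfl
    rw [Sym2.eq_swap] at hbd₂φ
    exact habφ hbd₂φ
  by_contra hne
  rw [Sym2.eq_swap] at habφ hbd₁φ hacφ hcd₁φ hcd₂φ
  have hclass {g : Sym2 V} : R e₀ g ↔ R s(d₁, b) g := hE.rel_congr_left hbd₁φ
  refine hwb ⟨b, c, d₁, a, d₂, hbc, had₁.symm, hne, had₂, hbd₁, hab.symm, hbd₂, hcd₁, hac.symm,
    hcd₂, ?_, ?_, ?_, ?_, ?_⟩
  · exact hclass.1 hbd₂φ
  · exact hclass.1 hacφ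
  · exact fun h => habφ (hclass.2 h)
  · exact fun h => hcd₁φ (hclass.2 h)
  · exact fun h => hcd₂φ (hclass.2 h)

theorem stmt13_general (G : SimpleGraph V) (R : Sym2 V → Sym2 V → Prop) (hR : IsRSP G R)
    (hwb : WellBehaved G R)
    (e₀ : Sym2 V) (x y : V)
    (hdist : ¬ (G.deleteEdges {e | R e₀ e}ᶜ).Reachable x y) :
    (∀ p q, (coverGraph G {e | R e₀ e} x y).Adj p q →
      (G.deleteEdges {e | R e₀ e}ᶜ).Adj p.val.1 q.val.1) ∧
    (∀ p (c : V), (G.deleteEdges {e | R e₀ e}ᶜ).Adj p.val.1 c →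
      ∃ q, (coverGraph G {e | R e₀ e} x y).Adj p q ∧ q.val.1 = c) ∧
    (∀ p q₁ q₂, (coverGraph G {e | R e₀ e} x y).Adj p q₁ →
      (coverGraph G {e | R e₀ e} x y).Adj p q₂ → q₁.val.1 = q₂.val.1 → q₁ = q₂) := by
  have hE := hR.1
  have cross {u v : V} (hu : (G.deleteEdges {e | R e₀ e}ᶜ).Reachable x u)
      (hv : (G.deleteEdges {e | R e₀ e}ᶜ).Reachable y v) : ¬ R e₀ s(u, v) :=
    mk_notMem_of_not_reachable (fun _ => hE.mem_right) hdist hu hv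
  refine ⟨fun p q ⟨hpq, hpqφ, _⟩ => deleteEdges_compl_adj.2 ⟨hpq, hpqφ⟩, ?_, ?_⟩
  · rintro ⟨⟨a, b⟩, hxa, hyb, hab⟩ c hac
    obtain ⟨hac, hacφ⟩ := deleteEdges_compl_adj.1 hac
    obtain ⟨w, hcw, hbw, hbwφ⟩ := hR.exists_square_of_not_rel_of_rel hab hac (cross hxa hyb) hacφ
    exact ⟨⟨(c, w), hxa.trans (deleteEdges_compl_adj.2 ⟨hac, hacφ⟩).reachable,
      hyb.trans (deleteEdges_compl_adj.2 ⟨hbw, hbwφ⟩).reachable, hcw⟩,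
      ⟨hac, hacφ, hbw, hbwφ⟩, rfl⟩
  · rintro ⟨⟨a, b⟩, hxa, hyb, hab⟩ ⟨⟨c, d₁⟩, hxc, hyd₁, hcd₁⟩ ⟨⟨c', d₂⟩, _, hyd₂, hcd₂⟩
      ⟨hac, hacφ, hbd₁, hbd₁φ⟩ ⟨_, _, hbd₂, hbd₂φ⟩ (rfl : c = c')
    obtain rfl := hwb.eq_of_squares hE hab hac hbd₁ hbd₂ hcd₁ hcd₂ (cross hxa hyb) hacφ hbd₁φ
      hbd₂φ (cross hxc hyd₁) (cross hxc hyd₂)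
    rfl

/-- For a well-behaved RSP-relation `R` on `G`, a class `φ` and two distinct adjacent
`φ`-layers, the map `[a,b] ↦ a` from `C_{G_φ^x,G_φ^y}` to the layer `G_φ^x` is a covering
map: a locally bijective homomorphism. -/
theorem stmt13 (G : SimpleGraph V) (R : Sym2 V → Sym2 V → Prop) (hR : IsRSP G R)
    (hwb : WellBehaved G R)
    (e₀ : Sym2 V) (he₀ : e₀ ∈ G.edgeSet) (x y : V)
    (hdist : ¬ (G.deleteEdges {e | R e₀ e}ᶜ).Reachable x y)
    (hadj : ∃ a b : V, (G.deleteEdges {e | R e₀ e}ᶜ).Reachable x a ∧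
      (G.deleteEdges {e | R e₀ e}ᶜ).Reachable y b ∧ G.Adj a b) :
    (∀ p q, (coverGraph G {e | R e₀ e} x y).Adj p q →
      (G.deleteEdges {e | R e₀ e}ᶜ).Adj p.val.1 q.val.1) ∧
    (∀ p (c : V), (G.deleteEdges {e | R e₀ e}ᶜ).Adj p.val.1 c →
      ∃ q, (coverGraph G {e | R e₀ e} x y).Adj p q ∧ q.val.1 = c) ∧
    (∀ p q₁ q₂, (coverGraph G {e | R e₀ e} x y).Adj p q₁ →
      (coverGraph G {e | R e₀ e} x y).Adj p q₂ → q₁.val.1 = q₂.val.1 → q₁ = q₂) :=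
  stmt13_general G R hR hwb e₀ x y hdist
end
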